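/- arXiv:1402.1865 — 3 statements merged into one kernel-verified Lean document; each statement's English description precedes it below -/
import Mathlib

section
/- Let α = s + t·τ + u·τ² + v·τ³ ∈ R with s, t, u, v ∈ ℤ, and let c = c' + c''·τ with c', c'' ∈ ℤ. Suppose 4 divides s − c', and write s − c' = 4·c̃ with c̃ ∈ ℤ. Then τ² divides α − c in R if and only if 4 divides t − c'' + 2μ·c̃. -/
open Polynomial

noncomputable def P (μ : ℤ) : ℤ[X] := X ^ 4 - C μ * X ^ 3 - C (2 * μ) * X + 4

noncomputable abbrev Rg (μ : ℤ) := AdjoinRoot (P μ)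

noncomputable def tau (μ : ℤ) : Rg μ := AdjoinRoot.root (P μ)

/-!
Reducing with `p(τ) = 0` and `s - c' = 4c̃` gives `α - c = nτ + τ²w` with `n = t - c'' + 2μc̃`, so
`τ² ∣ α - c` iff `τ² ∣ nτ`. Since `p(0) = 4` is not a zero divisor, neither is `τ`, so this says
`τ ∣ n`, and `R/τR ≅ ℤ/p(0)ℤ = ℤ/4ℤ`.
-/

namespace AdjoinRoot

variable {R : Type*} [CommRing R] {f : R[X]}

theorem of_coeff_zero_eq_neg_root_mul : of f (f.coeff 0) = -(root f * mk f f.divX) := by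
  rw [eq_neg_iff_add_eq_zero, ← mk_C, ← mk_X, ← map_mul, ← map_add, add_comm, X_mul_divX_add,
    mk_self]

theorem root_dvd_of_iff_coeff_zero_dvd (r : R) : root f ∣ of f r ↔ f.coeff 0 ∣ r := by
  constructor
  · rintro ⟨q, hq⟩
    obtain ⟨g, rfl⟩ := mk_surjective q
    obtain ⟨h, hh⟩ : f ∣ C r - X * g := by
      rw [← mk_eq_zero, map_sub, map_mul, mk_C, mk_X, sub_eq_zero]
      exact hq
    refine ⟨h.coeff 0, ?_⟩
    simpa using congrArg (coeff · 0) hh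
  · rintro ⟨k, rfl⟩
    rw [map_mul, of_coeff_zero_eq_neg_root_mul, neg_mul, mul_assoc]
    exact (dvd_mul_right _ _).neg_right

theorem isLeftRegular_root (hf : IsLeftRegular (f.coeff 0)) : IsLeftRegular (root f) := by
  refine isLeftRegular_of_non_zero_divisor _ fun a ha => ?_
  obtain ⟨g, rfl⟩ := mk_surjective a
  obtain ⟨h, hh⟩ : f ∣ X * g := by rwa [← mk_eq_zero, map_mul, mk_X]
  obtain ⟨h', rfl⟩ : X ∣ h := by
    rw [X_dvd_iff]
    refine hf ?_
    simpa using (congrArg (coeff · 0) hh).symm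
  rw [mk_eq_zero]
  refine ⟨h', isRegular_X.left ?_⟩
  simpa only [mul_left_comm] using hh

theorem root_sq_dvd_of_mul_root_iff (hf : IsLeftRegular (f.coeff 0)) (r : R) :
    root f ^ 2 ∣ of f r * root f ↔ f.coeff 0 ∣ r := by
  rw [pow_two, mul_comm (of f r), (isLeftRegular_root hf).dvd_cancel_left,
    root_dvd_of_iff_coeff_zero_dvd]

end AdjoinRoot

theorem P_coeff_zero (μ : ℤ) : (P μ).coeff 0 = 4 := by
  simp [P]

theorem tau_pow_four (μ : ℤ) : tau μ ^ 4 = μ * tau μ ^ 3 + 2 * μ * tau μ - 4 := by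
  have h : AdjoinRoot.mk (P μ) (X ^ 4 - C μ * X ^ 3 - C (2 * μ) * X + 4) = 0 := AdjoinRoot.mk_self
  simp only [map_add, map_sub, map_mul, map_pow, AdjoinRoot.mk_X, AdjoinRoot.mk_C, map_ofNat] at h
  simp only [eq_intCast] at h
  rw [tau]
  linear_combination h

theorem stmt3_general (μ : ℤ) (s t u v c' c'' ctil : ℤ)
    (hc : s - c' = 4 * ctil) :
    (tau μ ^ 2 ∣ (((s : Rg μ) + (t : Rg μ) * tau μ + (u : Rg μ) * tau μ ^ 2
        + (v : Rg μ) * tau μ ^ 3) - ((c' : Rg μ) + (c'' : Rg μ) * tau μ)))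
      ↔ (4 : ℤ) ∣ (t - c'' + 2 * μ * ctil) := by
  have hc' : (s : Rg μ) - c' = 4 * ctil := by exact_mod_cast congrArg (Int.cast : ℤ → Rg μ) hc
  have hdecomp : (s : Rg μ) + t * tau μ + u * tau μ ^ 2 + v * tau μ ^ 3 - (c' + c'' * tau μ)
      = ((t - c'' + 2 * μ * ctil : ℤ) : Rg μ) * tau μ
        + tau μ ^ 2 * (u + v * tau μ + μ * ctil * tau μ - ctil * tau μ ^ 2) := by
    push_cast
    linear_combination hc' + (ctil : Rg μ) * tau_pow_four μ
  have h4 : IsLeftRegular ((P μ).coeff 0) := by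
    rw [P_coeff_zero]
    exact (IsRegular.of_ne_zero (by norm_num)).left
  rw [hdecomp, dvd_add_left (dvd_mul_right _ _), ← eq_intCast (AdjoinRoot.of (P μ)), tau,
    AdjoinRoot.root_sq_dvd_of_mul_root_iff h4, P_coeff_zero]

/-- For `α = s + t·τ + u·τ² + v·τ³` and a digit `c = c' + c''·τ` with `s − c' = 4·c̃`,
`τ²` divides `α − c` in `R` if and only if `4 ∣ t − c'' + 2μ·c̃`. -/
theorem stmt3 (μ : ℤ) (hμ : μ = 1 ∨ μ = -1) (s t u v c' c'' ctil : ℤ)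
    (hc : s - c' = 4 * ctil) :
    (tau μ ^ 2 ∣ (((s : Rg μ) + (t : Rg μ) * tau μ + (u : Rg μ) * tau μ ^ 2
        + (v : Rg μ) * tau μ ^ 3) - ((c' : Rg μ) + (c'' : Rg μ) * tau μ)))
      ↔ (4 : ℤ) ∣ (t - c'' + 2 * μ * ctil) :=
  stmt3_general μ s t u v c' c'' ctil hc
end

section
/- GLS τ-adic expansions do not have minimal Hamming weight: there exist α ∈ R, a GLS τ-adic expansion (c_0, …, c_{ℓ−1}) of α, and digits b_0, …, b_{m−1} ∈ D with α = Σ_{i=0}^{m−1} b_i·τ^i in R (no condition on consecutive digits), such that the Hamming weight of (b_i) is strictly smaller than the Hamming weight of (c_i). -/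
open Polynomial

lemma tau_rel (μ : ℤ) :
    tau μ ^ 4 - (μ : Rg μ) * tau μ ^ 3 - ((2 * μ : ℤ) : Rg μ) * tau μ + 4 = 0 := by
  have h : (Polynomial.aeval (tau μ)) (P μ) = 0 := by
    rw [tau, AdjoinRoot.aeval_eq, AdjoinRoot.mk_self]
  simp only [P, map_add, map_sub, map_mul, map_pow, aeval_X, aeval_C, map_ofNat,
    algebraMap_int_eq, eq_intCast] at h
  convert h using 2
  norm_num

/-- Non-minimality of GLS τ-adic expansions: there is an `α ∈ R` with a GLS expansion
`(c_i)` and another expansion `(b_i)` over the same digit set (with no condition on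
consecutive digits) of strictly smaller Hamming weight. -/
theorem stmt6 (μ : ℤ) (hμ : μ = 1 ∨ μ = -1) :
    ∃ (α : Rg μ) (ℓ : ℕ) (c : ℕ → ℤ) (m : ℕ) (b : ℕ → ℤ),
      (∀ i < ℓ, -3 ≤ c i ∧ c i ≤ 3) ∧
      α = ∑ i ∈ Finset.range ℓ, (c i : Rg μ) * tau μ ^ i ∧
      (∀ i, i + 3 < ℓ → c i = 0 ∨ c (i + 1) = 0 ∨ c (i + 2) = 0 ∨ c (i + 3) = 0) ∧
      (∀ i < m, -3 ≤ b i ∧ b i ≤ 3) ∧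
      α = ∑ i ∈ Finset.range m, (b i : Rg μ) * tau μ ^ i ∧
      ((Finset.range m).filter (fun i => b i ≠ 0)).card
        < ((Finset.range ℓ).filter (fun i => c i ≠ 0)).card := by
  refine ⟨(-1 : Rg μ), 5,
    (fun i => if i = 0 then 3 else if i = 1 then -2 * μ else if i = 3 then -μ
      else if i = 4 then 1 else 0), 1, (fun _ => -1), ?_, ?_, ?_, ?_, ?_, ?_⟩
  · intro i hi
    interval_cases i <;> rcases hμ with h | h <;> subst h <;> norm_num
  · have h := tau_rel μ
    simp only [Finset.sum_range_succ, Finset.range_one, Finset.sum_singleton]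
    norm_num
    push_cast at h ⊢
    linear_combination -h
  · intro i hi
    have h2 : i < 2 := by omega
    interval_cases i <;> simp
  · intro i hi; norm_num
  · simp
  · rcases hμ with h | h <;> subst h <;> decide
end

section
/- For every α ∈ R there exist ℓ ∈ ℕ, digits c_0, …, c_{ℓ−1} ∈ D with at least one of c_i, c_{i+1}, c_{i+2}, c_{i+3} equal to 0 for every i with 0 ≤ i ≤ ℓ−4, and an element β ∈ R with Q(β) ≤ 38, such that α = Σ_{i=0}^{ℓ−1} c_i·τ^i + τ^ℓ·β in R. -/
/-!
All four complex roots `z` of `p` satisfy `‖z‖² = 2`: the quartic divided by `z²` says that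
`w = z + 2/z` solves `w² - μw - 4 = 0`, so `w` is real with `w² ≤ 8` and `z` is a root of
`z² - wz + 2`. Hence `Q(τβ) = 2 Q(β)`, and since `z̄ = 2/z` the value `Q(c₀ + c₁τ + c₂τ²)` is
computed from `Σ z = μ`; it is at most `3 (c₀² + 2c₁² + 4c₂²)`.

Write `α = a₀ + a₁τ + a₂τ² + a₃τ³`. Because `4 = τ (μτ² + 2μ - τ³)`, taking a digit `c ≡ a₀ mod 4`
gives `α = c + τα'`, and when `a₀ ≢ 0 mod 4` the two admissible digits let us choose the parity of
the carry `(a₀ - c)/4`. As `μ` is odd, this forces a digit `0` within four steps, so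
`α = Σ_{i<L} dᵢτⁱ + τᴸβ` with `L ≤ 4` and `d_{L-1} = 0`. From `2ᴸ Q(β) = Q(α - Σ dᵢτⁱ)` and
`Q(x - y) ≤ 2Q(x) + 2Q(y)`, `Q` drops by at least `1` while `Q(α) > 38`; concatenating the blocks
yields the expansion, every window of four consecutive digits containing the last digit of a block
or lying inside one.
-/

open Polynomial

noncomputable def Q (μ : ℤ) (α : Rg μ) : ℝ :=
  (1 / 2) * (((P μ).map (Int.castRingHom ℂ)).roots.attach.map
    (fun z => ‖AdjoinRoot.lift (Int.castRingHom ℂ) z.1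
      (by
        have h2 : Polynomial.eval z.1 ((P μ).map (Int.castRingHom ℂ)) = 0 :=
          (Polynomial.mem_roots'.mp z.2).2
        rwa [Polynomial.eval_map] at h2) α‖ ^ 2)).sum

theorem normSq_eq_two_of_sq_sub_mul_add_two {a : ℝ} (ha : a ^ 2 ≤ 8) {z : ℂ}
    (hz : z ^ 2 - a * z + 2 = 0) : Complex.normSq z = 2 ∧ 2 * z.re = a := by
  have hre := congrArg Complex.re hz
  have him := congrArg Complex.im hz
  simp only [pow_two, Complex.add_re, Complex.sub_re, Complex.mul_re, Complex.ofReal_re,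
    Complex.ofReal_im, Complex.re_ofNat, Complex.add_im, Complex.sub_im, Complex.mul_im,
    Complex.im_ofNat, Complex.zero_re, Complex.zero_im, zero_mul, sub_zero, add_zero] at hre him
  have hx : 2 * z.re = a := by
    rcases eq_or_ne z.im 0 with hy | hy
    · rw [hy] at hre
      nlinarith [sq_nonneg (2 * z.re - a)]
    · have : z.im * (2 * z.re - a) = 0 := by linarith
      have := (mul_eq_zero.mp this).resolve_left hy
      linarith
  refine ⟨?_, hx⟩
  rw [Complex.normSq_apply]
  rw [← hx] at hre
  linarith

theorem im_eq_zero_of_sq_sub_mul_sub_four {m : ℝ} {w : ℂ} (hw : w ^ 2 - m * w - 4 = 0) :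
    w.im = 0 := by
  have hre := congrArg Complex.re hw
  have him := congrArg Complex.im hw
  simp only [pow_two, Complex.sub_re, Complex.mul_re, Complex.ofReal_re, Complex.ofReal_im,
    Complex.re_ofNat, Complex.sub_im, Complex.mul_im, Complex.im_ofNat, Complex.zero_re,
    Complex.zero_im, zero_mul, sub_zero, add_zero] at hre him
  by_contra h
  have : 2 * w.re = m := by
    have : w.im * (2 * w.re - m) = 0 := by linarith
    have := (mul_eq_zero.mp this).resolve_left h
    linarith
  nlinarith [sq_nonneg w.im, sq_nonneg m]

theorem normSq_eq_two_of_quartic {m : ℝ} (hm : m ^ 2 ≤ 1) {z : ℂ}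
    (hz : z ^ 4 - m * z ^ 3 - 2 * m * z + 4 = 0) :
    Complex.normSq z = 2 ∧ (2 * z.re) ^ 2 = m * (2 * z.re) + 4 := by
  have hz0 : z ≠ 0 := by rintro rfl; norm_num at hz
  set w := z + 2 / z with hw
  have hwq : w ^ 2 - m * w - 4 = 0 := by
    rw [hw]; field_simp; linear_combination hz
  have hr : (w.re : ℂ) = w := Complex.ext rfl (by simp [im_eq_zero_of_sq_sub_mul_sub_four hwq])
  have hq : w.re ^ 2 - m * w.re - 4 = 0 := by
    have := congrArg Complex.re hwq
    rw [← hr] at this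
    simpa [pow_two] using this
  have hzq : z ^ 2 - w.re * z + 2 = 0 := by
    rw [hr, hw]; field_simp; ring
  have hmr : (m * w.re) ^ 2 ≤ w.re ^ 2 := by
    rw [mul_pow]; exact mul_le_of_le_one_left (sq_nonneg _) hm
  obtain ⟨h1, h2⟩ := normSq_eq_two_of_sq_sub_mul_add_two (by nlinarith) hzq
  exact ⟨h1, by rw [h2]; linarith⟩

theorem sq_norm_quadratic_of_normSq_eq_two {m : ℝ} {z : ℂ} (hz : Complex.normSq z = 2)
    (hre : (2 * z.re) ^ 2 = m * (2 * z.re) + 4) (c₀ c₁ c₂ : ℤ) :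
    ‖(c₀ + c₁ * z + c₂ * z ^ 2 : ℂ)‖ ^ 2 =
      c₀ ^ 2 + 2 * c₁ ^ 2 + 4 * c₂ ^ 2 + 2 * z.re * (c₀ * c₁ + 2 * c₁ * c₂ + m * c₀ * c₂) := by
  rw [Complex.sq_norm, Complex.normSq_apply] at *
  simp only [pow_two, Complex.add_re, Complex.add_im, Complex.mul_re, Complex.mul_im,
    Complex.intCast_re, Complex.intCast_im, zero_mul, sub_zero, add_zero, zero_add]
  linear_combination (c₀ * c₂ : ℝ) * hre +
    (c₁ ^ 2 + 2 * c₁ * c₂ * z.re - 2 * c₀ * c₂ + c₂ ^ 2 * (z.re * z.re + z.im * z.im + 2) : ℝ) * hz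

noncomputable abbrev complexRoots (μ : ℤ) : Multiset ℂ := ((P μ).map (Int.castRingHom ℂ)).roots

theorem P_monic (μ : ℤ) : (P μ).Monic := by
  unfold P; monicity!

theorem P_natDegree (μ : ℤ) : (P μ).natDegree = 4 := by
  unfold P; compute_degree!

theorem eval₂_P (μ : ℤ) (z : ℂ) :
    (P μ).eval₂ (Int.castRingHom ℂ) z = z ^ 4 - μ * z ^ 3 - 2 * μ * z + 4 := by
  simp only [P, eval₂_add, eval₂_sub, eval₂_mul, eval₂_X_pow, eval₂_C, eval₂_X, eval₂_ofNat]
  simp only [eq_intCast, Int.cast_mul, Int.cast_ofNat]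

theorem card_complexRoots (μ : ℤ) : (complexRoots μ).card = 4 := by
  rw [IsAlgClosed.card_roots_eq_natDegree, (P_monic μ).natDegree_map, P_natDegree]

theorem sum_complexRoots (μ : ℤ) : (complexRoots μ).sum = μ := by
  have h := (IsAlgClosed.splits ((P μ).map (Int.castRingHom ℂ))).nextCoeff_eq_neg_sum_roots_of_monic
    ((P_monic μ).map _)
  have hcoeff : (P μ).coeff 3 = -μ := by simp [P, -eq_intCast]
  rw [nextCoeff_map (RingHom.injective_int _),
    nextCoeff_of_natDegree_pos (by rw [P_natDegree]; norm_num), P_natDegree, hcoeff] at h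
  simp only [eq_intCast, Int.cast_neg, neg_inj] at h
  exact h.symm

theorem sum_re_complexRoots (μ : ℤ) : ((complexRoots μ).map Complex.re).sum = μ := by
  change ((complexRoots μ).map Complex.reAddGroupHom).sum = _
  rw [← map_multiset_sum, sum_complexRoots]
  simp [Complex.reAddGroupHom]

noncomputable def rootEval (μ : ℤ) (z : {z // z ∈ complexRoots μ}) : Rg μ →+* ℂ :=
  AdjoinRoot.lift (Int.castRingHom ℂ) z.1 (by
    rw [← Polynomial.eval_map]; exact (Polynomial.mem_roots'.mp z.2).2)

theorem Q_eq_sum (μ : ℤ) (α : Rg μ) :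
    Q μ α = 1 / 2 * ((complexRoots μ).attach.map fun z => ‖rootEval μ z α‖ ^ 2).sum := rfl

theorem rootEval_tau (μ : ℤ) (z : {z // z ∈ complexRoots μ}) : rootEval μ z (tau μ) = z :=
  AdjoinRoot.lift_root _

theorem normSq_eq_two_of_mem_complexRoots {μ : ℤ} (hμ : μ ^ 2 ≤ 1) {z : ℂ}
    (hz : z ∈ complexRoots μ) :
    Complex.normSq z = 2 ∧ (2 * z.re) ^ 2 = μ * (2 * z.re) + 4 := by
  have h := (Polynomial.mem_roots'.mp hz).2
  rw [IsRoot, eval_map, eval₂_P] at h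
  exact normSq_eq_two_of_quartic (m := μ) (by exact_mod_cast hμ) (by exact_mod_cast h)

theorem Q_sub_le (μ : ℤ) (x y : Rg μ) : Q μ (x - y) ≤ 2 * Q μ x + 2 * Q μ y := by
  have hsq (u v : ℂ) : ‖u - v‖ ^ 2 ≤ 2 * ‖u‖ ^ 2 + 2 * ‖v‖ ^ 2 := by
    nlinarith [norm_sub_le u v, norm_nonneg (u - v), sq_nonneg (‖u‖ - ‖v‖)]
  simp only [Q_eq_sum, map_sub]
  grw [Multiset.sum_map_le_sum_map _ _ fun z _ => hsq _ _]
  rw [Multiset.sum_map_add, Multiset.sum_map_mul_left, Multiset.sum_map_mul_left]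
  linarith

theorem Q_tau_mul {μ : ℤ} (hμ : μ ^ 2 ≤ 1) (β : Rg μ) : Q μ (tau μ * β) = 2 * Q μ β := by
  simp only [Q_eq_sum, map_mul, rootEval_tau, norm_mul, mul_pow]
  rw [Multiset.map_congr rfl fun z _ => by
    rw [Complex.sq_norm, (normSq_eq_two_of_mem_complexRoots hμ z.2).1], Multiset.sum_map_mul_left]
  ring

theorem Q_tau_pow_mul {μ : ℤ} (hμ : μ ^ 2 ≤ 1) (n : ℕ) (β : Rg μ) :
    Q μ (tau μ ^ n * β) = 2 ^ n * Q μ β := by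
  induction n with
  | zero => simp
  | succ n ih => rw [pow_succ', mul_assoc, Q_tau_mul hμ, ih, pow_succ']; ring

theorem Q_quadratic {μ : ℤ} (hμ : μ ^ 2 ≤ 1) (c₀ c₁ c₂ : ℤ) :
    Q μ (c₀ + c₁ * tau μ + c₂ * tau μ ^ 2) =
      2 * c₀ ^ 2 + 4 * c₁ ^ 2 + 8 * c₂ ^ 2 + μ * (c₀ * c₁ + 2 * c₁ * c₂) + μ ^ 2 * c₀ * c₂ := by
  simp only [Q_eq_sum, map_add, map_mul, map_pow, map_intCast, rootEval_tau]
  rw [Multiset.attach_map_val' _ fun z => ‖(c₀ + c₁ * z + c₂ * z ^ 2 : ℂ)‖ ^ 2,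
    Multiset.map_congr rfl fun z hz => (normSq_eq_two_of_mem_complexRoots hμ hz).elim
      fun h₁ h₂ => sq_norm_quadratic_of_normSq_eq_two h₁ h₂ c₀ c₁ c₂,
    Multiset.sum_map_add, Multiset.map_const', Multiset.sum_replicate, card_complexRoots,
    Multiset.sum_map_mul_right, Multiset.sum_map_mul_left, sum_re_complexRoots]
  simp only [nsmul_eq_mul]
  ring

theorem Q_quadratic_le {μ : ℤ} (hμ : μ ^ 2 ≤ 1) (c₀ c₁ c₂ : ℤ) :
    Q μ (c₀ + c₁ * tau μ + c₂ * tau μ ^ 2) ≤ 3 * (c₀ ^ 2 + 2 * c₁ ^ 2 + 4 * c₂ ^ 2) := by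
  have hμ' : (μ : ℝ) ^ 2 ≤ 1 := by exact_mod_cast hμ
  rw [Q_quadratic hμ]
  have hμ4 : (μ : ℝ) ^ 2 * (μ : ℝ) ^ 2 ≤ 1 := by nlinarith
  nlinarith [sq_nonneg ((c₀ : ℝ) - μ * c₁), sq_nonneg ((c₁ : ℝ) - μ * c₂),
    sq_nonneg ((c₀ : ℝ) - μ ^ 2 * c₂), mul_le_mul_of_nonneg_right hμ' (sq_nonneg (c₁ : ℝ)),
    mul_le_mul_of_nonneg_right hμ' (sq_nonneg (c₂ : ℝ)),
    mul_le_mul_of_nonneg_right hμ4 (sq_nonneg (c₂ : ℝ))]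

theorem tau_mul_eq_four (μ : ℤ) : tau μ * (μ * tau μ ^ 2 + 2 * μ - tau μ ^ 3) = 4 := by
  have h : aeval (tau μ) (P μ) = 0 := AdjoinRoot.aeval_eq (P μ) ▸ AdjoinRoot.mk_self
  simp only [P, eq_intCast, map_add, map_sub, map_mul, map_pow, aeval_X, map_intCast,
    map_ofNat] at h
  linear_combination -h

noncomputable def ofCoeffs (μ a₀ a₁ a₂ a₃ : ℤ) : Rg μ :=
  a₀ + a₁ * tau μ + a₂ * tau μ ^ 2 + a₃ * tau μ ^ 3

theorem exists_ofCoeffs_eq (μ : ℤ) (α : Rg μ) : ∃ a₀ a₁ a₂ a₃, ofCoeffs μ a₀ a₁ a₂ a₃ = α := by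
  have : Nontrivial (Rg μ) := AdjoinRoot.nontrivial (P μ) (by
    rw [degree_eq_natDegree (P_monic μ).ne_zero, P_natDegree]; decide)
  obtain ⟨f, hdeg, rfl⟩ := (AdjoinRoot.powerBasis' (P_monic μ)).exists_eq_aeval α
  rw [AdjoinRoot.powerBasis'_dim, P_natDegree] at hdeg
  refine ⟨f.coeff 0, f.coeff 1, f.coeff 2, f.coeff 3, ?_⟩
  rw [aeval_eq_sum_range' hdeg]
  simp [Finset.sum_range_succ, ofCoeffs, tau]

theorem ofCoeffs_eq_add_tau_mul {μ a₀ c k : ℤ} (h : a₀ = c + 4 * k) (a₁ a₂ a₃ : ℤ) :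
    ofCoeffs μ a₀ a₁ a₂ a₃ = c + tau μ * ofCoeffs μ (a₁ + 2 * μ * k) a₂ (a₃ + μ * k) (-k) := by
  simp only [ofCoeffs, h]
  push_cast
  linear_combination -(k : Rg μ) * tau_mul_eq_four μ

theorem exists_digit_of_not_four_dvd {a : ℤ} (ha : ¬ 4 ∣ a) (t : ℤ) :
    ∃ c k, (-3 ≤ c ∧ c ≤ 3) ∧ a = c + 4 * k ∧ k % 2 = t % 2 := by
  by_cases hq : a / 4 % 2 = t % 2
  · exact ⟨a % 4, a / 4, by omega, by omega, hq⟩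
  · exact ⟨a % 4 - 4, a / 4 + 1, by omega, by omega, by omega⟩

theorem Odd.two_dvd_add_mul_iff {μ : ℤ} (hμ : Odd μ) (a k : ℤ) : 2 ∣ a + μ * k ↔ 2 ∣ a + k := by
  obtain ⟨j, rfl⟩ := hμ
  have : (2 * j + 1) * k = 2 * (j * k) + k := by ring
  omega

theorem Odd.four_dvd_add_two_mul_mul_iff {μ : ℤ} (hμ : Odd μ) (a k : ℤ) :
    4 ∣ a + 2 * μ * k ↔ 4 ∣ a + 2 * k := by
  obtain ⟨j, rfl⟩ := hμ
  have : 2 * (2 * j + 1) * k = 4 * (j * k) + 2 * k := by ring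
  omega

def appendDigits (ℓ : ℕ) (c d : ℕ → ℤ) : ℕ → ℤ := fun i => if i < ℓ then c i else d (i - ℓ)

theorem sum_appendDigits {A : Type*} [CommRing A] (x : A) (ℓ m : ℕ) (c d : ℕ → ℤ) :
    ∑ i ∈ Finset.range (ℓ + m), (appendDigits ℓ c d i : A) * x ^ i =
      ∑ i ∈ Finset.range ℓ, (c i : A) * x ^ i +
        x ^ ℓ * ∑ i ∈ Finset.range m, (d i : A) * x ^ i := by
  rw [Finset.sum_range_add, Finset.mul_sum]
  congr 1
  · exact Finset.sum_congr rfl fun i hi => by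
      rw [appendDigits, if_pos (Finset.mem_range.mp hi)]
  · exact Finset.sum_congr rfl fun i _ => by
      rw [appendDigits, if_neg (by omega), Nat.add_sub_cancel_left, pow_add]
      ring

def IsGLSDigits (ℓ : ℕ) (c : ℕ → ℤ) : Prop :=
  (∀ i < ℓ, -3 ≤ c i ∧ c i ≤ 3) ∧
    ∀ i, i + 3 < ℓ → c i = 0 ∨ c (i + 1) = 0 ∨ c (i + 2) = 0 ∨ c (i + 3) = 0

theorem IsGLSDigits.append {ℓ₁ ℓ₂ : ℕ} {c₁ c₂ : ℕ → ℤ} (h₁ : IsGLSDigits ℓ₁ c₁)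
    (hlast : c₁ (ℓ₁ - 1) = 0) (h₂ : IsGLSDigits ℓ₂ c₂) :
    IsGLSDigits (ℓ₁ + ℓ₂) (appendDigits ℓ₁ c₁ c₂) := by
  have hleft (i : ℕ) (hi : i < ℓ₁) : appendDigits ℓ₁ c₁ c₂ i = c₁ i := if_pos hi
  have hright (j : ℕ) : appendDigits ℓ₁ c₁ c₂ (ℓ₁ + j) = c₂ j := by
    rw [appendDigits, if_neg (by omega), Nat.add_sub_cancel_left]
  refine ⟨fun i hi => ?_, fun i hi => ?_⟩
  · rcases lt_or_ge i ℓ₁ with h | h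
    · rw [hleft i h]; exact h₁.1 i h
    · obtain ⟨j, rfl⟩ := Nat.exists_eq_add_of_le h
      rw [hright]; exact h₂.1 j (by omega)
  rcases lt_or_ge (i + 3) ℓ₁ with h | h
  · rw [hleft i (by omega), hleft (i + 1) (by omega), hleft (i + 2) (by omega),
      hleft (i + 3) h]
    exact h₁.2 i h
  rcases lt_or_ge i ℓ₁ with h' | h'
  · have hzero : appendDigits ℓ₁ c₁ c₂ (ℓ₁ - 1) = 0 := by rw [hleft _ (by omega), hlast]
    obtain h | h | h | h : i = ℓ₁ - 1 ∨ i + 1 = ℓ₁ - 1 ∨ i + 2 = ℓ₁ - 1 ∨ i + 3 = ℓ₁ - 1 := by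
      omega
    all_goals rw [h]; tauto
  · obtain ⟨j, rfl⟩ := Nat.exists_eq_add_of_le h'
    simp only [add_assoc, hright]
    exact h₂.2 j (by omega)

structure IsDigitBlock (μ : ℤ) (L : ℕ) (d : ℕ → ℤ) (α β : Rg μ) : Prop where
  pos : 0 < L
  le_four : L ≤ 4
  digit_bound : ∀ i, -3 ≤ d i ∧ d i ≤ 3
  eq_zero : ∀ i, L ≤ i + 1 → d i = 0
  eq : α = ∑ i ∈ Finset.range L, (d i : Rg μ) * tau μ ^ i + tau μ ^ L * β

theorem isDigitBlock_one {μ : ℤ} (β : Rg μ) : IsDigitBlock μ 1 0 (tau μ * β) β where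
  pos := one_pos
  le_four := by norm_num
  digit_bound _ := by norm_num
  eq_zero _ _ := rfl
  eq := by simp

theorem IsDigitBlock.cons {μ : ℤ} {L : ℕ} {d : ℕ → ℤ} {α β : Rg μ} (h : IsDigitBlock μ L d α β)
    (hL : L ≤ 3) {c : ℤ} (hc : -3 ≤ c ∧ c ≤ 3) :
    IsDigitBlock μ (1 + L) (appendDigits 1 (fun _ => c) d) (c + tau μ * α) β where
  pos := by omega
  le_four := by omega
  digit_bound i := by unfold appendDigits; split_ifs; exacts [hc, h.digit_bound _]
  eq_zero i hi := by
    have := h.pos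
    rw [appendDigits, if_neg (by omega)]; exact h.eq_zero _ (by omega)
  eq := by
    rw [sum_appendDigits, h.eq, Finset.sum_range_one, pow_zero, mul_one, pow_one]
    ring

theorem IsDigitBlock.isGLSDigits {μ : ℤ} {L : ℕ} {d : ℕ → ℤ} {α β : Rg μ}
    (h : IsDigitBlock μ L d α β) : IsGLSDigits L d :=
  ⟨fun i _ => h.digit_bound i, fun i hi => by
    have := h.le_four
    exact Or.inr <| Or.inr <| Or.inr <| h.eq_zero _ (by omega)⟩

section Blocks

variable {μ : ℤ} {a₀ a₁ a₂ a₃ : ℤ}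

theorem exists_isDigitBlock_one (h₀ : 4 ∣ a₀) :
    ∃ β, IsDigitBlock μ 1 0 (ofCoeffs μ a₀ a₁ a₂ a₃) β := by
  rw [ofCoeffs_eq_add_tau_mul (c := 0) (k := a₀ / 4) (by omega), Int.cast_zero, zero_add]
  exact ⟨_, isDigitBlock_one _⟩

theorem exists_isDigitBlock_two (hμ : Odd μ) (h₀ : ¬ 4 ∣ a₀) (h₁ : 2 ∣ a₁) :
    ∃ d β, IsDigitBlock μ 2 d (ofCoeffs μ a₀ a₁ a₂ a₃) β := by
  obtain ⟨c, k, hc, rfl, hk⟩ := exists_digit_of_not_four_dvd h₀ (a₁ / 2)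
  have h₁' : 4 ∣ a₁ + 2 * μ * k := (hμ.four_dvd_add_two_mul_mul_iff a₁ k).mpr (by omega)
  obtain ⟨β, hβ⟩ := exists_isDigitBlock_one (μ := μ) (a₁ := a₂) (a₂ := a₃ + μ * k) (a₃ := -k) h₁'
  rw [ofCoeffs_eq_add_tau_mul rfl]
  exact ⟨_, β, hβ.cons (by norm_num) hc⟩

theorem exists_isDigitBlock_three (hμ : Odd μ) (h₁ : ¬ 2 ∣ a₁) (h₂ : 2 ∣ a₂) :
    ∃ d β, IsDigitBlock μ 3 d (ofCoeffs μ a₀ a₁ a₂ a₃) β := by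
  have h₁' : ¬ 4 ∣ a₁ + 2 * μ * (a₀ / 4) := by
    rw [hμ.four_dvd_add_two_mul_mul_iff]; omega
  obtain ⟨d, β, hβ⟩ := exists_isDigitBlock_two (a₂ := a₃ + μ * (a₀ / 4)) (a₃ := -(a₀ / 4)) hμ h₁' h₂
  rw [ofCoeffs_eq_add_tau_mul (c := a₀ % 4) (k := a₀ / 4) (by omega)]
  exact ⟨_, β, hβ.cons (by norm_num) (by omega)⟩

theorem exists_isDigitBlock_four (hμ : Odd μ) (h₀ : ¬ 4 ∣ a₀) (h₁ : ¬ 2 ∣ a₁) (h₂ : ¬ 2 ∣ a₂) :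
    ∃ d β, IsDigitBlock μ 4 d (ofCoeffs μ a₀ a₁ a₂ a₃) β := by
  obtain ⟨c, k, hc, rfl, hk⟩ := exists_digit_of_not_four_dvd h₀ a₃
  have h₁' : ¬ 2 ∣ a₁ + 2 * μ * k := by
    rw [mul_assoc]; omega
  have h₃' : 2 ∣ a₃ + μ * k := (hμ.two_dvd_add_mul_iff a₃ k).mpr (by omega)
  obtain ⟨d, β, hβ⟩ := exists_isDigitBlock_three (a₀ := a₁ + 2 * μ * k) (a₃ := -k) hμ h₂ h₃'
  rw [ofCoeffs_eq_add_tau_mul rfl]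
  exact ⟨_, β, hβ.cons (by norm_num) hc⟩

end Blocks

theorem exists_isDigitBlock {μ : ℤ} (hμ : Odd μ) (α : Rg μ) : ∃ L d β, IsDigitBlock μ L d α β := by
  obtain ⟨a₀, a₁, a₂, a₃, rfl⟩ := exists_ofCoeffs_eq μ α
  by_cases h₀ : 4 ∣ a₀
  · exact ⟨1, 0, exists_isDigitBlock_one h₀⟩
  by_cases h₁ : 2 ∣ a₁
  · exact ⟨2, exists_isDigitBlock_two hμ h₀ h₁⟩
  by_cases h₂ : 2 ∣ a₂
  · exact ⟨3, exists_isDigitBlock_three hμ h₁ h₂⟩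
  · exact ⟨4, exists_isDigitBlock_four hμ h₀ h₁ h₂⟩

namespace IsDigitBlock

variable {μ : ℤ} {L : ℕ} {d : ℕ → ℤ} {α β : Rg μ}

theorem sum_eq (h : IsDigitBlock μ L d α β) :
    ∑ i ∈ Finset.range L, (d i : Rg μ) * tau μ ^ i = d 0 + d 1 * tau μ + d 2 * tau μ ^ 2 := by
  have := h.pos
  have := h.le_four
  have hz (i : ℕ) (hi : L ≤ i + 1) : (d i : Rg μ) = 0 := by rw [h.eq_zero i hi, Int.cast_zero]
  interval_cases L
  · simp [hz 0, hz 1, hz 2]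
  · simp [Finset.sum_range_succ, hz 1, hz 2]
  · simp [Finset.sum_range_succ, hz 2]
  · simp [Finset.sum_range_succ, hz 3]

theorem Q_add_one_le (hμ : μ ^ 2 ≤ 1) (h : IsDigitBlock μ L d α β) (hα : 38 < Q μ α) :
    Q μ β + 1 ≤ Q μ α := by
  set C : Rg μ := d 0 + d 1 * tau μ + d 2 * tau μ ^ 2
  have hβ : 2 ^ L * Q μ β = Q μ (α - C) := by
    rw [← Q_tau_pow_mul hμ, h.eq, h.sum_eq, add_sub_cancel_left]
  have hC := Q_quadratic_le hμ (d 0) (d 1) (d 2)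
  have hd (i : ℕ) : (d i : ℝ) ^ 2 ≤ 9 := by
    have := h.digit_bound i
    exact_mod_cast (show d i ^ 2 ≤ 9 by nlinarith)
  have hz (i : ℕ) (hi : L ≤ i + 1) : (d i : ℝ) = 0 := by rw [h.eq_zero i hi, Int.cast_zero]
  have hsub := Q_sub_le μ α C
  have := h.pos
  have := h.le_four
  interval_cases L
  · have hC0 : C = 0 := by simp [C, h.eq_zero]
    rw [hC0, sub_zero] at hβ
    linarith
  · rw [hz 1 (by norm_num), hz 2 (by norm_num)] at hC
    linarith [hd 0]
  · rw [hz 2 (by norm_num)] at hC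
    linarith [hd 0, hd 1]
  · linarith [hd 0, hd 1, hd 2]

end IsDigitBlock

def HasGLSExpansion (μ : ℤ) (α : Rg μ) : Prop :=
  ∃ (ℓ : ℕ) (c : ℕ → ℤ) (β : Rg μ), IsGLSDigits ℓ c ∧ Q μ β ≤ 38 ∧
    α = ∑ i ∈ Finset.range ℓ, (c i : Rg μ) * tau μ ^ i + tau μ ^ ℓ * β

theorem hasGLSExpansion_of_Q_le {μ : ℤ} {α : Rg μ} (h : Q μ α ≤ 38) : HasGLSExpansion μ α :=
  ⟨0, 0, α, ⟨by simp, by simp⟩, h, by simp⟩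

theorem IsDigitBlock.hasGLSExpansion {μ : ℤ} {L : ℕ} {d : ℕ → ℤ} {α β : Rg μ}
    (h : IsDigitBlock μ L d α β) (hβ : HasGLSExpansion μ β) : HasGLSExpansion μ α := by
  obtain ⟨ℓ, c, γ, hc, hγ, rfl⟩ := hβ
  have := h.pos
  refine ⟨L + ℓ, appendDigits L d c, γ, h.isGLSDigits.append (h.eq_zero _ (by omega)) hc, hγ, ?_⟩
  rw [sum_appendDigits, h.eq, pow_add]
  ring

theorem hasGLSExpansion {μ : ℤ} (hμ : μ = 1 ∨ μ = -1) (α : Rg μ) : HasGLSExpansion μ α := by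
  have hodd : Odd μ := by rcases hμ with rfl | rfl <;> decide
  have hμ2 : μ ^ 2 ≤ 1 := by rcases hμ with rfl | rfl <;> norm_num
  suffices ∀ n : ℕ, ∀ α : Rg μ, Q μ α ≤ n + 38 → HasGLSExpansion μ α from
    this _ α (by linarith [Nat.le_ceil (Q μ α)])
  intro n
  induction n with
  | zero => exact fun α hα => hasGLSExpansion_of_Q_le (by simpa using hα)
  | succ n ih =>
    intro α hα
    by_cases h38 : Q μ α ≤ 38
    · exact hasGLSExpansion_of_Q_le h38
    obtain ⟨L, d, β, hblock⟩ := exists_isDigitBlock hodd α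
    have hdrop := hblock.Q_add_one_le hμ2 (not_le.mp h38)
    exact hblock.hasGLSExpansion (ih β (by push_cast at hα; linarith))

/-- Reduction for the GLS expansion: every `α ∈ R` can be written as
`Σ_{i<ℓ} c_i·τ^i + τ^ℓ·β` with GLS digits (among any four consecutive digits at
least one is zero) and a remainder `β` with `Q(β) ≤ 38`. -/
theorem stmt15 (μ : ℤ) (hμ : μ = 1 ∨ μ = -1) (α : Rg μ) :
    ∃ (ℓ : ℕ) (c : ℕ → ℤ) (β : Rg μ),
      (∀ i < ℓ, -3 ≤ c i ∧ c i ≤ 3) ∧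
      (∀ i, i + 3 < ℓ → c i = 0 ∨ c (i + 1) = 0 ∨ c (i + 2) = 0 ∨ c (i + 3) = 0) ∧
      Q μ β ≤ 38 ∧
      α = (∑ i ∈ Finset.range ℓ, (c i : Rg μ) * tau μ ^ i) + tau μ ^ ℓ * β := by
  obtain ⟨ℓ, c, β, ⟨hbound, hwindow⟩, hβ, heq⟩ := hasGLSExpansion hμ α
  exact ⟨ℓ, c, β, hbound, hwindow, hβ, heq⟩
end
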